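/- Let p be a prime, n ≥ 1, and let S = (F_{p^n},+,⋆) be a finite presemifield with spread set C. Let C^t = {φ̄ : φ ∈ C} be the transpose spread set, where φ̄ denotes the adjoint of φ with respect to the trace form ⟨x,y⟩ = Tr_{F_{p^n}/F_p}(xy). Then N_r(C) = {ν̄ : ν ∈ N_m(C^t)} and N_m(C) = {ν̄ : ν ∈ N_r(C^t)}, where for a subset D of End_{F_p}(F_{p^n}) one sets N_r(D) = {μ : μ∘φ ∈ D for all φ ∈ D} and N_m(D) = {μ : φ∘μ ∈ D for all φ ∈ D}. -/

import Mathlib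

/-- A finite presemifield of characteristic `p`: multiplication is additive
(equivalently, `ZMod p`-linear) in each argument and has no zero divisors.
For `y`, `mul.flip y` is the right-multiplication map `φ_y : x ↦ x ⋆ y`. -/
structure Presemifield (p : ℕ) (S : Type*) [AddCommGroup S] [Module (ZMod p) S] where
  mul : S →ₗ[ZMod p] S →ₗ[ZMod p] S
  eq_zero_or_eq_zero : ∀ x y : S, mul x y = 0 → x = 0 ∨ y = 0

/-- The spread set `C = {φ_y : y ∈ S}` of a presemifield. -/
def Presemifield.spread {p : ℕ} {S : Type*} [AddCommGroup S] [Module (ZMod p) S]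
    (M : Presemifield p S) : Set (S →ₗ[ZMod p] S) :=
  Set.range M.mul.flip

/-- The right-nucleus set `N_r(D) = {μ : μ∘φ ∈ D for all φ ∈ D}`. -/
def rightNucleusSet {p : ℕ} {S : Type*} [AddCommGroup S] [Module (ZMod p) S]
    (D : Set (S →ₗ[ZMod p] S)) : Set (S →ₗ[ZMod p] S) :=
  {μ | ∀ φ ∈ D, μ ∘ₗ φ ∈ D}

/-- The middle-nucleus set `N_m(D) = {μ : φ∘μ ∈ D for all φ ∈ D}`. -/
def middleNucleusSet {p : ℕ} {S : Type*} [AddCommGroup S] [Module (ZMod p) S]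
    (D : Set (S →ₗ[ZMod p] S)) : Set (S →ₗ[ZMod p] S) :=
  {μ | ∀ φ ∈ D, φ ∘ₗ μ ∈ D}

/-!
Taking adjoints with respect to a nondegenerate symmetric bilinear form is an involution of
`End(F)` reversing composition: `adj (adj φ) = φ` and `adj (μ ∘ φ) = adj φ ∘ adj μ`. Such a map
turns `φ ∘ μ ∈ D` into `adj μ ∘ adj φ ∈ adj '' D`, so it carries the middle nucleus set of `D` onto
the right nucleus set of `adj '' D` and vice versa; applying this to `adj '' C` and using
`adj '' (adj '' C) = C` gives both identities.
-/

namespace LinearMap.BilinForm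

variable {R M : Type*} [CommRing R] [AddCommGroup M] [Module R M] {B : LinearMap.BilinForm R M}
  {adj : Module.End R M → Module.End R M}

theorem involutive_of_forall_isAdjointPair (hB : B.Nondegenerate) (hsymm : B.IsSymm)
    (hadj : ∀ φ, IsAdjointPair B B (adj φ) φ) : Function.Involutive adj := fun φ =>
  B.isAdjointPair_unique_of_nondegenerate hB (adj φ) _ _ (hadj (adj φ))
    fun x y => by rw [hsymm.eq, ← hadj φ, hsymm.eq]

theorem map_comp_of_forall_isAdjointPair (hB : B.Nondegenerate)
    (hadj : ∀ φ, IsAdjointPair B B (adj φ) φ) (μ φ : Module.End R M) :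
    adj (μ ∘ₗ φ) = adj φ ∘ₗ adj μ :=
  B.isAdjointPair_unique_of_nondegenerate hB (μ ∘ₗ φ) _ _ (hadj _) ((hadj φ).mul (hadj μ))

end LinearMap.BilinForm

section NucleusSet

variable {p : ℕ} {S : Type*} [AddCommGroup S] [Module (ZMod p) S]
  {adj : (S →ₗ[ZMod p] S) → (S →ₗ[ZMod p] S)}

theorem image_middleNucleusSet_of_involutive (hinv : Function.Involutive adj)
    (hcomp : ∀ μ φ, adj (μ ∘ₗ φ) = adj φ ∘ₗ adj μ) (D : Set (S →ₗ[ZMod p] S)) :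
    adj '' middleNucleusSet D = rightNucleusSet (adj '' D) := by
  ext μ
  rw [Set.mem_image_iff_of_inverse hinv.leftInverse hinv.rightInverse]
  show _ ↔ ∀ ψ ∈ adj '' D, _
  rw [Set.forall_mem_image]
  exact forall₂_congr fun φ _ => by
    rw [Set.mem_image_iff_of_inverse hinv.leftInverse hinv.rightInverse, hcomp, hinv]

theorem image_rightNucleusSet_of_involutive (hinv : Function.Involutive adj)
    (hcomp : ∀ μ φ, adj (μ ∘ₗ φ) = adj φ ∘ₗ adj μ) (D : Set (S →ₗ[ZMod p] S)) :
    adj '' rightNucleusSet D = middleNucleusSet (adj '' D) := by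
  ext μ
  rw [Set.mem_image_iff_of_inverse hinv.leftInverse hinv.rightInverse]
  show _ ↔ ∀ ψ ∈ adj '' D, _
  rw [Set.forall_mem_image]
  exact forall₂_congr fun φ _ => by
    rw [Set.mem_image_iff_of_inverse hinv.leftInverse hinv.rightInverse, hcomp, hinv]

end NucleusSet

theorem statement6_general (p n : ℕ) [Fact p.Prime]
    (M : Presemifield p (GaloisField p n))
    (adj : (GaloisField p n →ₗ[ZMod p] GaloisField p n) →
      (GaloisField p n →ₗ[ZMod p] GaloisField p n))
    (hadj : ∀ (φ : GaloisField p n →ₗ[ZMod p] GaloisField p n) (x y : GaloisField p n),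
      Algebra.trace (ZMod p) (GaloisField p n) (x * φ y) =
        Algebra.trace (ZMod p) (GaloisField p n) (adj φ x * y)) :
    rightNucleusSet M.spread = adj '' middleNucleusSet (adj '' M.spread) ∧
    middleNucleusSet M.spread = adj '' rightNucleusSet (adj '' M.spread) := by
  have hB := traceForm_nondegenerate (ZMod p) (GaloisField p n)
  have hpair : ∀ φ, LinearMap.IsAdjointPair (Algebra.traceForm (ZMod p) (GaloisField p n))
      (Algebra.traceForm (ZMod p) (GaloisField p n)) (adj φ) φ :=
    fun φ x y => (hadj φ x y).symm
  have hinv := LinearMap.BilinForm.involutive_of_forall_isAdjointPair hB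
    (Algebra.traceForm_isSymm _) hpair
  have hcomp := LinearMap.BilinForm.map_comp_of_forall_isAdjointPair hB hpair
  rw [image_middleNucleusSet_of_involutive hinv hcomp, image_rightNucleusSet_of_involutive hinv hcomp,
    ← Set.image_comp, hinv.comp_self, Set.image_id]
  exact ⟨rfl, rfl⟩

theorem statement6 (p n : ℕ) [Fact p.Prime] (hn : n ≠ 0)
    (M : Presemifield p (GaloisField p n))
    (adj : (GaloisField p n →ₗ[ZMod p] GaloisField p n) →
      (GaloisField p n →ₗ[ZMod p] GaloisField p n))
    (hadj : ∀ (φ : GaloisField p n →ₗ[ZMod p] GaloisField p n) (x y : GaloisField p n),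
      Algebra.trace (ZMod p) (GaloisField p n) (x * φ y) =
        Algebra.trace (ZMod p) (GaloisField p n) (adj φ x * y)) :
    rightNucleusSet M.spread = adj '' middleNucleusSet (adj '' M.spread) ∧
    middleNucleusSet M.spread = adj '' rightNucleusSet (adj '' M.spread) :=
  statement6_general p n M adj hadj
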